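/- arXiv:1108.5058 — 3 statements merged into one kernel-verified Lean document; each statement's English description precedes it below -/
import Mathlib

section
/- The linear discrete-time system (A) is P-strongly exponentially dichotomic if and only if there exist constants D ≥ 1, d > 0 and c with 0 ≤ c < d such that for all natural numbers m ≥ n ≥ p and all x ∈ X, the series Σ_{j=n}^{∞} e^{d(j−n)}‖𝒜_P(j,p)x‖ converges and Σ_{j=n}^{∞} e^{d(j−n)}‖𝒜_P(j,p)x‖ + Σ_{k=n}^{m} e^{d(m−k)}‖𝒜_Q(k,n)x‖ ≤ D(e^{cn}‖𝒜_P(n,p)x‖ + e^{cm}‖𝒜_Q(m,n)x‖). -/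
open Real

/-- The evolution operator started at time `n`, after `k` steps:
`A(n+k) ⋯ A(n+1)`. -/
noncomputable def evolFrom {X : Type*} [NormedAddCommGroup X] [NormedSpace ℝ X]
    (A : ℕ → X →L[ℝ] X) (n : ℕ) : ℕ → X →L[ℝ] X
  | 0 => 1
  | k + 1 => (A (n + k + 1)).comp (evolFrom A n k)

/-- The evolution operator `𝒜(m,n) = A(m) ⋯ A(n+1)` for `m ≥ n`, `𝒜(n,n) = I`. -/
noncomputable def evol {X : Type*} [NormedAddCommGroup X] [NormedSpace ℝ X]
    (A : ℕ → X →L[ℝ] X) (m n : ℕ) : X →L[ℝ] X :=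
  evolFrom A n (m - n)

/-- `𝒜_P(m,n) = 𝒜(m,n) P(n)`. -/
noncomputable def evolP {X : Type*} [NormedAddCommGroup X] [NormedSpace ℝ X]
    (A P : ℕ → X →L[ℝ] X) (m n : ℕ) : X →L[ℝ] X :=
  (evol A m n).comp (P n)

/-- `𝒜_Q(m,n) = 𝒜(m,n) Q(n)` where `Q(n) = I - P(n)`. -/
noncomputable def evolQ {X : Type*} [NormedAddCommGroup X] [NormedSpace ℝ X]
    (A P : ℕ → X →L[ℝ] X) (m n : ℕ) : X →L[ℝ] X :=
  (evol A m n).comp (1 - P n)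

/-- The system is P-strongly exponentially dichotomic. -/
def IsSED {X : Type*} [NormedAddCommGroup X] [NormedSpace ℝ X]
    (A P : ℕ → X →L[ℝ] X) : Prop :=
  ∃ N α β : ℝ, 1 ≤ N ∧ 0 < α ∧ 0 ≤ β ∧ β < α ∧
    ∀ m n : ℕ, n ≤ m → ∀ x : X,
      exp (α * ((m : ℝ) - n)) * (‖evolP A P m n x‖ + ‖(1 - P n) x‖) ≤
        N * (exp (β * n) * ‖P n x‖ + exp (β * m) * ‖evolQ A P m n x‖)

/-!
Applying the dichotomy inequality to `𝒜_P(n,p)x`, which lies in the range of `P(n)`, gives the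
decay `e^{α(m-n)}‖𝒜_P(m,p)x‖ ≤ N e^{βn}‖𝒜_P(n,p)x‖`; applying it to `𝒜_Q(k,n)x`, which lies in
the kernel of `P(k)`, gives the growth `e^{α(m-k)}‖𝒜_Q(k,n)x‖ ≤ N e^{βm}‖𝒜_Q(m,n)x‖`. For any
`β < d < α` the weighted terms of both series are then dominated by a geometric series of ratio
`e^{d-α}`, so the sums are bounded with `D = N / (1 - e^{d-α})` and `c = β`. Conversely, for
`p = n` the terms `j = m - n` and `k = n` of the two series already give the dichotomy inequality
with the constants `D, d, c`.
-/

open Finset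

section Evolution

variable {X : Type*} [NormedAddCommGroup X] [NormedSpace ℝ X] (A P : ℕ → X →L[ℝ] X)

lemma evolFrom_add (n a b : ℕ) :
    evolFrom A n (a + b) = (evolFrom A (n + a) b).comp (evolFrom A n a) := by
  induction b with
  | zero => ext x; simp [evolFrom]
  | succ b ih =>
    rw [← add_assoc, evolFrom, ih, evolFrom, ContinuousLinearMap.comp_assoc, add_assoc n a b]

lemma evol_self (n : ℕ) : evol A n n = 1 := by
  simp [evol, evolFrom]

lemma evol_comp_evol {n k m : ℕ} (hnk : n ≤ k) (hkm : k ≤ m) :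
    (evol A m k).comp (evol A k n) = evol A m n := by
  rw [evol, evol, evol, show m - n = (k - n) + (m - k) by omega, evolFrom_add,
    Nat.add_sub_cancel' hnk]

lemma evolP_self (n : ℕ) : evolP A P n n = P n := by
  simp [evolP, evol_self, ContinuousLinearMap.one_def]

lemma evolQ_self (n : ℕ) : evolQ A P n n = 1 - P n := by
  simp [evolQ, evol_self, ContinuousLinearMap.one_def]

variable {A P}

lemma comp_evolFrom_of_compat
    (hCompat : ∀ n, (A (n + 1)).comp (P n) = (P (n + 1)).comp (A (n + 1))) (n k : ℕ) :
    (P (n + k)).comp (evolFrom A n k) = (evolFrom A n k).comp (P n) := by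
  induction k with
  | zero => simp [evolFrom, ContinuousLinearMap.one_def]
  | succ k ih =>
    rw [evolFrom, ← add_assoc, ← ContinuousLinearMap.comp_assoc, ← hCompat,
      ContinuousLinearMap.comp_assoc, ih, ContinuousLinearMap.comp_assoc]

lemma comp_evol_of_compat
    (hCompat : ∀ n, (A (n + 1)).comp (P n) = (P (n + 1)).comp (A (n + 1)))
    {n m : ℕ} (hnm : n ≤ m) :
    (P m).comp (evol A m n) = (evol A m n).comp (P n) := by
  simpa [evol, Nat.add_sub_cancel' hnm] using comp_evolFrom_of_compat hCompat n (m - n)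

lemma proj_evolP (hProj : ∀ n, (P n).comp (P n) = P n)
    (hCompat : ∀ n, (A (n + 1)).comp (P n) = (P (n + 1)).comp (A (n + 1)))
    {p m : ℕ} (hpm : p ≤ m) (x : X) :
    P m (evolP A P m p x) = evolP A P m p x := by
  rw [evolP, ← ContinuousLinearMap.comp_apply, ← ContinuousLinearMap.comp_assoc,
    comp_evol_of_compat hCompat hpm, ContinuousLinearMap.comp_assoc, hProj]

lemma proj_evolQ (hProj : ∀ n, (P n).comp (P n) = P n)
    (hCompat : ∀ n, (A (n + 1)).comp (P n) = (P (n + 1)).comp (A (n + 1)))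
    {n k : ℕ} (hnk : n ≤ k) (x : X) : P k (evolQ A P k n x) = 0 := by
  rw [evolQ, ← ContinuousLinearMap.comp_apply, ← ContinuousLinearMap.comp_assoc,
    comp_evol_of_compat hCompat hnk, ContinuousLinearMap.comp_assoc,
    ContinuousLinearMap.comp_sub, hProj]
  simp

lemma evolP_evolP (hProj : ∀ n, (P n).comp (P n) = P n)
    (hCompat : ∀ n, (A (n + 1)).comp (P n) = (P (n + 1)).comp (A (n + 1)))
    {p n m : ℕ} (hpn : p ≤ n) (hnm : n ≤ m) (x : X) :
    evolP A P m n (evolP A P n p x) = evolP A P m p x := by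
  conv_lhs => rw [evolP, ContinuousLinearMap.comp_apply, proj_evolP hProj hCompat hpn]
  rw [evolP, evolP, ContinuousLinearMap.comp_apply, ← ContinuousLinearMap.comp_apply,
    evol_comp_evol A hpn hnm, ContinuousLinearMap.comp_apply]

lemma evolQ_evolQ (hProj : ∀ n, (P n).comp (P n) = P n)
    (hCompat : ∀ n, (A (n + 1)).comp (P n) = (P (n + 1)).comp (A (n + 1)))
    {n k m : ℕ} (hnk : n ≤ k) (hkm : k ≤ m) (x : X) :
    evolQ A P m k (evolQ A P k n x) = evolQ A P m n x := by
  have hQ : (1 - P k) (evolQ A P k n x) = evolQ A P k n x := by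
    simp [proj_evolQ hProj hCompat hnk]
  rw [evolQ, ContinuousLinearMap.comp_apply, hQ, evolQ, evolQ, ← ContinuousLinearMap.comp_apply,
    ← ContinuousLinearMap.comp_assoc, evol_comp_evol A hnk hkm]

end Evolution

lemma summable_and_tsum_le_of_le_geometric {f : ℕ → ℝ} {C r : ℝ} (hf : ∀ j, 0 ≤ f j)
    (hr₀ : 0 ≤ r) (hr₁ : r < 1) (hle : ∀ j, f j ≤ C * r ^ j) :
    Summable f ∧ ∑' j, f j ≤ C * (1 - r)⁻¹ := by
  have hgeom : Summable (fun j => C * r ^ j) :=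
    (summable_geometric_of_lt_one hr₀ hr₁).mul_left C
  have hsum : Summable f := .of_nonneg_of_le hf hle hgeom
  refine ⟨hsum, ?_⟩
  calc ∑' j, f j ≤ ∑' j, C * r ^ j := hsum.tsum_le_tsum hle hgeom
    _ = C * (1 - r)⁻¹ := by rw [tsum_mul_left, tsum_geometric_of_lt_one hr₀ hr₁]

lemma sum_Icc_pow_sub_le {r : ℝ} (hr₀ : 0 ≤ r) (hr₁ : r < 1) (n m : ℕ) :
    ∑ k ∈ Icc n m, r ^ (m - k) ≤ (1 - r)⁻¹ := by
  have hinj : Set.InjOn (m - ·) (Icc n m : Set ℕ) := fun a ha b hb hab => by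
    simp only [coe_Icc, Set.mem_Icc] at ha hb hab
    omega
  rw [← sum_image hinj, ← tsum_geometric_of_lt_one hr₀ hr₁]
  exact (summable_geometric_of_lt_one hr₀ hr₁).sum_le_tsum _ fun i _ => pow_nonneg hr₀ i

lemma exp_mul_natCast_eq_pow_mul (d α : ℝ) (j : ℕ) :
    exp (d * j) = exp (d - α) ^ j * exp (α * j) := by
  rw [← exp_nat_mul, ← exp_add]
  ring_nf

section Dichotomy

variable {X : Type*} [NormedAddCommGroup X] [NormedSpace ℝ X] {A P : ℕ → X →L[ℝ] X}

def IsSEDWith (A P : ℕ → X →L[ℝ] X) (N α β : ℝ) : Prop :=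
  ∀ m n : ℕ, n ≤ m → ∀ x : X,
    exp (α * ((m : ℝ) - n)) * (‖evolP A P m n x‖ + ‖(1 - P n) x‖) ≤
      N * (exp (β * n) * ‖P n x‖ + exp (β * m) * ‖evolQ A P m n x‖)

namespace IsSEDWith

variable {N α β : ℝ}

lemma norm_evolP_le (h : IsSEDWith A P N α β) (hProj : ∀ n, (P n).comp (P n) = P n)
    (hCompat : ∀ n, (A (n + 1)).comp (P n) = (P (n + 1)).comp (A (n + 1)))
    {p n m : ℕ} (hpn : p ≤ n) (hnm : n ≤ m) (x : X) :
    exp (α * ((m : ℝ) - n)) * ‖evolP A P m p x‖ ≤ N * (exp (β * n) * ‖evolP A P n p x‖) := by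
  have hPy := proj_evolP hProj hCompat hpn x
  have hQy : (1 - P n) (evolP A P n p x) = 0 := by simp [hPy]
  have h' := h m n hnm (evolP A P n p x)
  rwa [evolQ, ContinuousLinearMap.comp_apply, hQy, map_zero, hPy, evolP_evolP hProj hCompat hpn hnm,
    norm_zero, mul_zero, add_zero, add_zero] at h'

lemma norm_evolQ_le (h : IsSEDWith A P N α β) (hProj : ∀ n, (P n).comp (P n) = P n)
    (hCompat : ∀ n, (A (n + 1)).comp (P n) = (P (n + 1)).comp (A (n + 1)))
    {n k m : ℕ} (hnk : n ≤ k) (hkm : k ≤ m) (x : X) :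
    exp (α * ((m : ℝ) - k)) * ‖evolQ A P k n x‖ ≤ N * (exp (β * m) * ‖evolQ A P m n x‖) := by
  have hPz := proj_evolQ hProj hCompat hnk x
  have hQz : (1 - P k) (evolQ A P k n x) = evolQ A P k n x := by simp [hPz]
  have h' := h m k hkm (evolQ A P k n x)
  rwa [evolP, ContinuousLinearMap.comp_apply, hPz, map_zero, hQz, evolQ_evolQ hProj hCompat hnk hkm,
    norm_zero, zero_add, mul_zero, zero_add] at h'

lemma summable_and_tsum_weighted_evolP_le (h : IsSEDWith A P N α β)
    (hProj : ∀ n, (P n).comp (P n) = P n)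
    (hCompat : ∀ n, (A (n + 1)).comp (P n) = (P (n + 1)).comp (A (n + 1)))
    {d : ℝ} (hdα : d < α) {p n : ℕ} (hpn : p ≤ n) (x : X) :
    Summable (fun j : ℕ => exp (d * j) * ‖evolP A P (n + j) p x‖) ∧
      ∑' j : ℕ, exp (d * j) * ‖evolP A P (n + j) p x‖ ≤
        N * exp (β * n) * ‖evolP A P n p x‖ * (1 - exp (d - α))⁻¹ := by
  refine summable_and_tsum_le_of_le_geometric (fun j => by positivity) (exp_pos _).le
    (exp_lt_one_iff.2 (by linarith)) fun j => ?_
  have hdecay := h.norm_evolP_le hProj hCompat hpn (Nat.le_add_right n j) x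
  rw [Nat.cast_add, add_sub_cancel_left] at hdecay
  calc exp (d * j) * ‖evolP A P (n + j) p x‖
      = exp (d - α) ^ j * (exp (α * j) * ‖evolP A P (n + j) p x‖) := by
        rw [exp_mul_natCast_eq_pow_mul d α, mul_assoc]
    _ ≤ exp (d - α) ^ j * (N * (exp (β * n) * ‖evolP A P n p x‖)) := by gcongr
    _ = N * exp (β * n) * ‖evolP A P n p x‖ * exp (d - α) ^ j := by ring

lemma sum_weighted_evolQ_le (h : IsSEDWith A P N α β) (hProj : ∀ n, (P n).comp (P n) = P n)
    (hCompat : ∀ n, (A (n + 1)).comp (P n) = (P (n + 1)).comp (A (n + 1)))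
    (hN : 0 ≤ N) {d : ℝ} (hdα : d < α) (n m : ℕ) (x : X) :
    ∑ k ∈ Icc n m, exp (d * ((m : ℝ) - k)) * ‖evolQ A P k n x‖ ≤
      N * exp (β * m) * ‖evolQ A P m n x‖ * (1 - exp (d - α))⁻¹ := by
  have hterm : ∀ k ∈ Icc n m, exp (d * ((m : ℝ) - k)) * ‖evolQ A P k n x‖ ≤
      N * exp (β * m) * ‖evolQ A P m n x‖ * exp (d - α) ^ (m - k) := by
    intro k hk
    obtain ⟨hnk, hkm⟩ := mem_Icc.1 hk
    have hgrowth := h.norm_evolQ_le hProj hCompat hnk hkm x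
    rw [← Nat.cast_sub hkm] at hgrowth ⊢
    calc exp (d * ↑(m - k)) * ‖evolQ A P k n x‖
        = exp (d - α) ^ (m - k) * (exp (α * ↑(m - k)) * ‖evolQ A P k n x‖) := by
          rw [exp_mul_natCast_eq_pow_mul d α, mul_assoc]
      _ ≤ exp (d - α) ^ (m - k) * (N * (exp (β * m) * ‖evolQ A P m n x‖)) := by gcongr
      _ = N * exp (β * m) * ‖evolQ A P m n x‖ * exp (d - α) ^ (m - k) := by ring
  calc ∑ k ∈ Icc n m, exp (d * ((m : ℝ) - k)) * ‖evolQ A P k n x‖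
      ≤ ∑ k ∈ Icc n m, N * exp (β * m) * ‖evolQ A P m n x‖ * exp (d - α) ^ (m - k) :=
        sum_le_sum hterm
    _ ≤ N * exp (β * m) * ‖evolQ A P m n x‖ * (1 - exp (d - α))⁻¹ := by
        rw [← mul_sum]
        gcongr
        exact sum_Icc_pow_sub_le (exp_pos _).le (exp_lt_one_iff.2 (by linarith)) n m

end IsSEDWith

lemma isSEDWith_of_sum_bound {D d c : ℝ}
    (h : ∀ m n : ℕ, n ≤ m → ∀ x : X,
      Summable (fun j : ℕ => exp (d * j) * ‖evolP A P (n + j) n x‖) ∧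
      (∑' j : ℕ, exp (d * j) * ‖evolP A P (n + j) n x‖) +
          ∑ k ∈ Icc n m, exp (d * ((m : ℝ) - k)) * ‖evolQ A P k n x‖ ≤
        D * (exp (c * n) * ‖evolP A P n n x‖ + exp (c * m) * ‖evolQ A P m n x‖)) :
    IsSEDWith A P D d c := by
  intro m n hnm x
  obtain ⟨hsum, hbound⟩ := h m n hnm x
  have hP : exp (d * ((m : ℝ) - n)) * ‖evolP A P m n x‖ ≤
      ∑' j : ℕ, exp (d * j) * ‖evolP A P (n + j) n x‖ := by
    have hj := hsum.le_tsum (m - n) fun j _ => by positivity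
    rwa [Nat.add_sub_cancel' hnm, Nat.cast_sub hnm] at hj
  have hQ : exp (d * ((m : ℝ) - n)) * ‖(1 - P n) x‖ ≤
      ∑ k ∈ Icc n m, exp (d * ((m : ℝ) - k)) * ‖evolQ A P k n x‖ := by
    have hk := single_le_sum (f := fun k : ℕ => exp (d * ((m : ℝ) - k)) * ‖evolQ A P k n x‖)
      (fun k _ => by positivity) (left_mem_Icc.2 hnm)
    rwa [evolQ_self] at hk
  rw [evolP_self] at hbound
  linarith

end Dichotomy

theorem strong_exponential_dichotomy_iff_general
    {X : Type*} [NormedAddCommGroup X] [NormedSpace ℝ X]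
    (A P : ℕ → X →L[ℝ] X)
    (hProj : ∀ n, (P n).comp (P n) = P n)
    (hCompat : ∀ n, (A (n + 1)).comp (P n) = (P (n + 1)).comp (A (n + 1))) :
    IsSED A P ↔
      ∃ D d c : ℝ, 1 ≤ D ∧ 0 < d ∧ 0 ≤ c ∧ c < d ∧
        ∀ m n p : ℕ, p ≤ n → n ≤ m → ∀ x : X,
          Summable (fun j : ℕ => exp (d * j) * ‖evolP A P (n + j) p x‖) ∧
          (∑' j : ℕ, exp (d * j) * ‖evolP A P (n + j) p x‖) +
              ∑ k ∈ Finset.Icc n m, exp (d * ((m : ℝ) - k)) * ‖evolQ A P k n x‖ ≤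
            D * (exp (c * n) * ‖evolP A P n p x‖ + exp (c * m) * ‖evolQ A P m n x‖) := by
  constructor
  · rintro ⟨N, α, β, hN, -, hβ, hβα, hsed⟩
    have hsed : IsSEDWith A P N α β := hsed
    obtain ⟨d, hβd, hdα⟩ := exists_between hβα
    have hinv : 1 ≤ (1 - exp (d - α))⁻¹ :=
      (one_le_inv₀ (sub_pos.2 (exp_lt_one_iff.2 (by linarith)))).2
        (by linarith [exp_pos (d - α)])
    refine ⟨N * (1 - exp (d - α))⁻¹, d, β, one_le_mul_of_one_le_of_one_le hN hinv,
      by linarith, hβ, hβd, fun m n p hpn hnm x => ?_⟩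
    obtain ⟨hsum, htsum⟩ := hsed.summable_and_tsum_weighted_evolP_le hProj hCompat hdα hpn x
    have hQ := hsed.sum_weighted_evolQ_le hProj hCompat (by linarith) hdα n m x
    exact ⟨hsum, by linear_combination htsum + hQ⟩
  · rintro ⟨D, d, c, hD, hd, hc, hcd, hbound⟩
    exact ⟨D, d, c, hD, hd, hc, hcd,
      isSEDWith_of_sum_bound fun m n hnm x => hbound m n n le_rfl hnm x⟩

/-- Proposition (characterization of strong exponential dichotomy). -/
theorem strong_exponential_dichotomy_iff
    {X : Type*} [NormedAddCommGroup X] [NormedSpace ℝ X] [CompleteSpace X]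
    (A P : ℕ → X →L[ℝ] X)
    (hProj : ∀ n, (P n).comp (P n) = P n)
    (hCompat : ∀ n, (A (n + 1)).comp (P n) = (P (n + 1)).comp (A (n + 1))) :
    IsSED A P ↔
      ∃ D d c : ℝ, 1 ≤ D ∧ 0 < d ∧ 0 ≤ c ∧ c < d ∧
        ∀ m n p : ℕ, p ≤ n → n ≤ m → ∀ x : X,
          Summable (fun j : ℕ => exp (d * j) * ‖evolP A P (n + j) p x‖) ∧
          (∑' j : ℕ, exp (d * j) * ‖evolP A P (n + j) p x‖) +
              ∑ k ∈ Finset.Icc n m, exp (d * ((m : ℝ) - k)) * ‖evolQ A P k n x‖ ≤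
            D * (exp (c * n) * ‖evolP A P n p x‖ + exp (c * m) * ‖evolQ A P m n x‖) :=
  strong_exponential_dichotomy_iff_general A P hProj hCompat
end

section
/- The linear discrete-time system (A) is P-exponentially dichotomic if and only if there exist constants N ≥ 1, α > 0 and β ≥ 0 such that e^{α(m−n)}(‖𝒜_P(m,p)x‖ + ‖𝒜_Q(n,p)x‖) ≤ N(e^{βn}‖𝒜_P(n,p)x‖ + e^{βm}‖𝒜_Q(m,p)x‖) for all natural numbers m ≥ n ≥ p and all x ∈ X. -/
open Real

/-- The system is P-exponentially dichotomic. -/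
def IsED {X : Type*} [NormedAddCommGroup X] [NormedSpace ℝ X]
    (A P : ℕ → X →L[ℝ] X) : Prop :=
  ∃ N α β : ℝ, 1 ≤ N ∧ 0 < α ∧ 0 ≤ β ∧
    ∀ m n : ℕ, n ≤ m → ∀ x : X,
      exp (α * ((m : ℝ) - n)) * (‖evolP A P m n x‖ + ‖(1 - P n) x‖) ≤
        N * (exp (β * n) * ‖P n x‖ + exp (β * m) * ‖evolQ A P m n x‖)

lemma evolFrom_add_s7 {X : Type*} [NormedAddCommGroup X] [NormedSpace ℝ X]
    (A : ℕ → X →L[ℝ] X) (p k : ℕ) :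
    ∀ j, evolFrom A p (k + j) = (evolFrom A (p + k) j).comp (evolFrom A p k)
  | 0 => by ext x; simp [evolFrom]
  | j + 1 => by
    have h : p + (k + j) + 1 = p + k + j + 1 := by omega
    show (A (p + (k + j) + 1)).comp (evolFrom A p (k + j)) = _
    rw [h, evolFrom_add_s7 A p k j]
    ext x; rfl

lemma evol_comp {X : Type*} [NormedAddCommGroup X] [NormedSpace ℝ X]
    (A : ℕ → X →L[ℝ] X) {p n m : ℕ} (h1 : p ≤ n) (h2 : n ≤ m) :
    (evol A m n).comp (evol A n p) = evol A m p := by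
  unfold evol
  have h : m - p = (n - p) + (m - n) := by omega
  rw [h, evolFrom_add_s7 A p (n - p) (m - n), show p + (n - p) = n by omega]

lemma evolFrom_comp_P {X : Type*} [NormedAddCommGroup X] [NormedSpace ℝ X]
    (A P : ℕ → X →L[ℝ] X)
    (hCompat : ∀ n, (A (n + 1)).comp (P n) = (P (n + 1)).comp (A (n + 1))) (p : ℕ) :
    ∀ k, (evolFrom A p k).comp (P p) = (P (p + k)).comp (evolFrom A p k)
  | 0 => by ext x; simp [evolFrom]
  | k + 1 => by
    show ((A (p + k + 1)).comp (evolFrom A p k)).comp (P p) = _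
    rw [ContinuousLinearMap.comp_assoc, evolFrom_comp_P A P hCompat p k,
      ← ContinuousLinearMap.comp_assoc, hCompat (p + k),
      show p + (k + 1) = p + k + 1 from rfl]
    ext x; rfl

lemma evol_comp_P {X : Type*} [NormedAddCommGroup X] [NormedSpace ℝ X]
    (A P : ℕ → X →L[ℝ] X)
    (hCompat : ∀ n, (A (n + 1)).comp (P n) = (P (n + 1)).comp (A (n + 1)))
    {p n : ℕ} (h : p ≤ n) :
    (evol A n p).comp (P p) = (P n).comp (evol A n p) := by
  have := evolFrom_comp_P A P hCompat p (n - p)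
  rwa [show p + (n - p) = n by omega] at this

lemma evol_P_apply {X : Type*} [NormedAddCommGroup X] [NormedSpace ℝ X]
    (A P : ℕ → X →L[ℝ] X)
    (hCompat : ∀ n, (A (n + 1)).comp (P n) = (P (n + 1)).comp (A (n + 1)))
    {p n : ℕ} (h : p ≤ n) (x : X) :
    P n (evol A n p x) = evol A n p (P p x) := by
  have := congrArg (fun T : X →L[ℝ] X => T x) (evol_comp_P A P hCompat h)
  simpa using this.symm

lemma evol_Q_apply {X : Type*} [NormedAddCommGroup X] [NormedSpace ℝ X]
    (A P : ℕ → X →L[ℝ] X)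
    (hCompat : ∀ n, (A (n + 1)).comp (P n) = (P (n + 1)).comp (A (n + 1)))
    {p n : ℕ} (h : p ≤ n) (x : X) :
    (1 - P n) (evol A n p x) = evol A n p ((1 - P p) x) := by
  simp only [ContinuousLinearMap.sub_apply, ContinuousLinearMap.one_apply, map_sub]
  rw [evol_P_apply A P hCompat h]

lemma evol_apply_comp {X : Type*} [NormedAddCommGroup X] [NormedSpace ℝ X]
    (A : ℕ → X →L[ℝ] X) {p n m : ℕ} (h1 : p ≤ n) (h2 : n ≤ m) (x : X) :
    evol A m n (evol A n p x) = evol A m p x := by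
  have := congrArg (fun T : X →L[ℝ] X => T x) (evol_comp A h1 h2)
  simpa using this

/-- Remark: three-index characterization of exponential dichotomy. -/
theorem exponential_dichotomy_iff_three_indices
    {X : Type*} [NormedAddCommGroup X] [NormedSpace ℝ X] [CompleteSpace X]
    (A P : ℕ → X →L[ℝ] X)
    (hProj : ∀ n, (P n).comp (P n) = P n)
    (hCompat : ∀ n, (A (n + 1)).comp (P n) = (P (n + 1)).comp (A (n + 1))) :
    IsED A P ↔
      ∃ N α β : ℝ, 1 ≤ N ∧ 0 < α ∧ 0 ≤ β ∧
        ∀ m n p : ℕ, p ≤ n → n ≤ m → ∀ x : X,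
          exp (α * ((m : ℝ) - n)) * (‖evolP A P m p x‖ + ‖evolQ A P n p x‖) ≤
            N * (exp (β * n) * ‖evolP A P n p x‖ + exp (β * m) * ‖evolQ A P m p x‖) := by
  constructor
  · rintro ⟨N, α, β, hN, hα, hβ, hED⟩
    refine ⟨N, α, β, hN, hα, hβ, fun m n p hpn hnm x => ?_⟩
    have key := hED m n hnm (evol A n p x)
    have e1 : evolP A P m n (evol A n p x) = evolP A P m p x := by
      simp only [evolP, ContinuousLinearMap.comp_apply]
      rw [evol_P_apply A P hCompat hpn, evol_apply_comp A hpn hnm]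
    have e2 : (1 - P n) (evol A n p x) = evolQ A P n p x := by
      rw [evol_Q_apply A P hCompat hpn]; rfl
    have e3 : P n (evol A n p x) = evolP A P n p x := by
      rw [evol_P_apply A P hCompat hpn]; rfl
    have e4 : evolQ A P m n (evol A n p x) = evolQ A P m p x := by
      simp only [evolQ, ContinuousLinearMap.comp_apply]
      rw [evol_Q_apply A P hCompat hpn, evol_apply_comp A hpn hnm]
    rwa [e1, e2, e3, e4] at key
  · rintro ⟨N, α, β, hN, hα, hβ, h3⟩
    refine ⟨N, α, β, hN, hα, hβ, fun m n hnm x => ?_⟩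
    have key := h3 m n n le_rfl hnm x
    have hnn : evol A n n = 1 := by simp [evol, evolFrom]
    have e1 : evolP A P n n x = P n x := by simp [evolP, hnn]
    have e2 : evolQ A P n n x = (1 - P n) x := by simp [evolQ, hnn]
    rwa [e1, e2] at key
end

section
/- Consider the system on X = ℝ² given by A(n)(x₁,x₂) = (c₁ a_n x₁, c₂ a_n x₂) with c₁ = e^{−4}, c₂ = e², where a_n = e^{−n} if n is even and a_n = e^{n+1} if n is odd, with projections P(n)(x₁,x₂) = (x₁,0). Then with N = e, α = 2 and β = 1 one has e^{α(m−n)}(‖𝒜_P(m,n)x‖ + ‖Q(n)x‖) ≤ N(e^{βn}‖P(n)x‖ + e^{βm}‖𝒜_Q(m,n)x‖) for all m ≥ n and all x ∈ ℝ²; in particular the system is P-strongly exponentially dichotomic. -/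
open Real

/-- The diagonal operator `(x₁, x₂) ↦ (u x₁, v x₂)` on `ℝ²`. -/
noncomputable def diagCLM (u v : ℝ) : ℝ × ℝ →L[ℝ] ℝ × ℝ :=
  (u • ContinuousLinearMap.fst ℝ ℝ ℝ).prod (v • ContinuousLinearMap.snd ℝ ℝ ℝ)

/-- The family of projections `P(n)(x₁, x₂) = (x₁, 0)` on `ℝ²`. -/
noncomputable def projFst : ℕ → (ℝ × ℝ →L[ℝ] ℝ × ℝ) :=
  fun _ => (ContinuousLinearMap.fst ℝ ℝ ℝ).prod 0

/-- Auxiliary: `Tfun n = Σ_{k ≤ n} e(k)` where `a k = exp (e k)`. -/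
noncomputable def Tfun (n : ℕ) : ℝ := if Even n then 0 else (n : ℝ) + 1

lemma Tfun_nonneg (n : ℕ) : 0 ≤ Tfun n := by unfold Tfun; split <;> positivity

lemma Tfun_le (n : ℕ) : Tfun n ≤ (n : ℝ) + 1 := by
  unfold Tfun; split
  · positivity
  · exact le_refl _

lemma diagCLM_apply (u v : ℝ) (x : ℝ × ℝ) : diagCLM u v x = (u * x.1, v * x.2) := by
  simp [diagCLM]

lemma diagCLM_comp (u v u' v' : ℝ) :
    (diagCLM u v).comp (diagCLM u' v') = diagCLM (u * u') (v * v') := by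
  ext x <;> simp [diagCLM_apply, mul_assoc]

lemma diagCLM_one : diagCLM 1 1 = 1 := by
  ext x <;> simp [diagCLM_apply]

lemma projFst_apply (n : ℕ) (x : ℝ × ℝ) : projFst n x = (x.1, 0) := by
  simp [projFst]

lemma one_sub_projFst_apply (n : ℕ) (x : ℝ × ℝ) : (1 - projFst n) x = (0, x.2) := by
  simp [projFst, Prod.ext_iff]

lemma norm_pair (c d : ℝ) : ‖((c, d) : ℝ × ℝ)‖ = max |c| |d| := by
  simp [Prod.norm_def]

lemma a_succ (a : ℕ → ℝ)
    (ha : ∀ n, a n = if Even n then exp (-(n : ℝ)) else exp ((n : ℝ) + 1))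
    (k : ℕ) : a (k + 1) = exp (Tfun (k + 1) - Tfun k) := by
  rw [ha]
  rcases Nat.even_or_odd k with h | h
  · rw [if_neg (Nat.not_even_iff_odd.mpr h.add_one)]
    unfold Tfun
    rw [if_neg (Nat.not_even_iff_odd.mpr h.add_one), if_pos h]
    push_cast; ring_nf
  · rw [if_pos h.add_one]
    unfold Tfun
    rw [if_pos h.add_one, if_neg (Nat.not_even_iff_odd.mpr h)]
    push_cast; ring_nf

lemma evolFrom_eq (a : ℕ → ℝ)
    (ha : ∀ n, a n = if Even n then exp (-(n : ℝ)) else exp ((n : ℝ) + 1))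
    (A : ℕ → ℝ × ℝ →L[ℝ] ℝ × ℝ)
    (hA : ∀ n, A n = diagCLM (exp (-4) * a n) (exp 2 * a n))
    (n k : ℕ) :
    evolFrom A n k = diagCLM (exp (-4 * k + Tfun (n + k) - Tfun n))
      (exp (2 * k + Tfun (n + k) - Tfun n)) := by
  induction k with
  | zero => simp [evolFrom, diagCLM_one]
  | succ k ih =>
    rw [show evolFrom A n (k + 1) = (A (n + k + 1)).comp (evolFrom A n k) from rfl,
      ih, hA, a_succ a ha (n + k), ← exp_add, ← exp_add, diagCLM_comp, ← exp_add, ← exp_add]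
    congr 2 <;> (rw [show n + (k + 1) = n + k + 1 from rfl]; push_cast; ring)

lemma evol_eq (a : ℕ → ℝ)
    (ha : ∀ n, a n = if Even n then exp (-(n : ℝ)) else exp ((n : ℝ) + 1))
    (A : ℕ → ℝ × ℝ →L[ℝ] ℝ × ℝ)
    (hA : ∀ n, A n = diagCLM (exp (-4) * a n) (exp 2 * a n))
    (m n : ℕ) (hnm : n ≤ m) :
    evol A m n = diagCLM (exp (-4 * ((m : ℝ) - n) + Tfun m - Tfun n))
      (exp (2 * ((m : ℝ) - n) + Tfun m - Tfun n)) := by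
  rw [evol, evolFrom_eq a ha A hA, Nat.add_sub_cancel' hnm,
    Nat.cast_sub hnm]

lemma key_ineq (p q r s a1 a2 : ℝ) (h1 : p ≤ q) (h2 : r ≤ s)
    (ha1 : 0 ≤ a1) (ha2 : 0 ≤ a2) :
    exp p * a1 + exp r * a2 ≤ exp q * a1 + exp s * a2 :=
  add_le_add (mul_le_mul_of_nonneg_right (exp_le_exp.2 h1) ha1)
    (mul_le_mul_of_nonneg_right (exp_le_exp.2 h2) ha2)

/-- Example: with `c₁ = e⁻⁴`, `c₂ = e²`, the system is P-strongly exponentially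
dichotomic, with `N = e`, `α = 2`, `β = 1`. -/
theorem example_strong_exponential_dichotomy
    (a : ℕ → ℝ)
    (ha : ∀ n, a n = if Even n then exp (-(n : ℝ)) else exp ((n : ℝ) + 1))
    (A : ℕ → ℝ × ℝ →L[ℝ] ℝ × ℝ)
    (hA : ∀ n, A n = diagCLM (exp (-4) * a n) (exp 2 * a n)) :
    (∀ m n : ℕ, n ≤ m → ∀ x : ℝ × ℝ,
      exp (2 * ((m : ℝ) - n)) * (‖evolP A projFst m n x‖ + ‖(1 - projFst n) x‖) ≤
        exp 1 * (exp (1 * (n : ℝ)) * ‖projFst n x‖ +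
          exp (1 * (m : ℝ)) * ‖evolQ A projFst m n x‖)) ∧
    IsSED A projFst := by
  have main : ∀ m n : ℕ, n ≤ m → ∀ x : ℝ × ℝ,
      exp (2 * ((m : ℝ) - n)) * (‖evolP A projFst m n x‖ + ‖(1 - projFst n) x‖) ≤
        exp 1 * (exp (1 * (n : ℝ)) * ‖projFst n x‖ +
          exp (1 * (m : ℝ)) * ‖evolQ A projFst m n x‖) := by
    intro m n hnm x
    have hnm' : (n : ℝ) ≤ m := Nat.cast_le.mpr hnm
    set u : ℝ := -4 * ((m : ℝ) - n) + Tfun m - Tfun n with hu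
    set v : ℝ := 2 * ((m : ℝ) - n) + Tfun m - Tfun n with hv
    have hP : ‖evolP A projFst m n x‖ = exp u * |x.1| := by
      rw [evolP, ContinuousLinearMap.comp_apply, projFst_apply,
        evol_eq a ha A hA m n hnm, diagCLM_apply]
      rw [show ((x.1, (0:ℝ)) : ℝ × ℝ).1 = x.1 from rfl,
        show ((x.1, (0:ℝ)) : ℝ × ℝ).2 = 0 from rfl, mul_zero, norm_pair, abs_zero,
        abs_mul, abs_of_pos (exp_pos _), max_eq_left (by positivity)]
    have hQ : ‖evolQ A projFst m n x‖ = exp v * |x.2| := by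
      rw [evolQ, ContinuousLinearMap.comp_apply, one_sub_projFst_apply,
        evol_eq a ha A hA m n hnm, diagCLM_apply]
      rw [show (((0:ℝ), x.2) : ℝ × ℝ).1 = 0 from rfl,
        show (((0:ℝ), x.2) : ℝ × ℝ).2 = x.2 from rfl, mul_zero, norm_pair, abs_zero,
        abs_mul, abs_of_pos (exp_pos _), max_eq_right (by positivity)]
    have hPn : ‖projFst n x‖ = |x.1| := by
      rw [projFst_apply, norm_pair]; simp
    have hQn : ‖(1 - projFst n) x‖ = |x.2| := by
      rw [one_sub_projFst_apply, norm_pair]; simp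
    rw [hP, hQ, hPn, hQn]
    have lhs_eq : exp (2 * ((m : ℝ) - n)) * (exp u * |x.1| + |x.2|) =
        exp (2 * ((m : ℝ) - n) + u) * |x.1| + exp (2 * ((m : ℝ) - n)) * |x.2| := by
      rw [exp_add]; ring
    have rhs_eq : exp 1 * (exp (1 * (n : ℝ)) * |x.1| +
        exp (1 * (m : ℝ)) * (exp v * |x.2|)) =
        exp (1 + 1 * (n : ℝ)) * |x.1| + exp (1 + 1 * (m : ℝ) + v) * |x.2| := by
      rw [exp_add, exp_add, exp_add]; ring
    rw [lhs_eq, rhs_eq]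
    have h1 : 2 * ((m : ℝ) - n) + u ≤ 1 + 1 * (n : ℝ) := by
      have := Tfun_le m
      have := Tfun_nonneg n
      rw [hu]; nlinarith
    have h2 : 2 * ((m : ℝ) - n) ≤ 1 + 1 * (m : ℝ) + v := by
      have := Tfun_le n
      have := Tfun_nonneg m
      rw [hv]; nlinarith
    exact key_ineq _ _ _ _ _ _ h1 h2 (abs_nonneg _) (abs_nonneg _)
  exact ⟨main, exp 1, 2, 1, one_le_exp (by norm_num), by norm_num, by norm_num,
    by norm_num, main⟩
end
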